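/- arXiv:2512.24619 — 2 statements merged into one kernel-verified Lean document; each statement's English description precedes it below -/
import Mathlib

section
/- (External-to-swap regret reduction.) Let Σ be a finite set. Suppose at each round τ = 1,…,T a mixed strategy p_τ ∈ Δ(Σ) satisfies p_τ = p_τ·Q_τ (p_τ is a stationary distribution of the row-stochastic matrix Q_τ whose rows are q_{τ,σ} ∈ Δ(Σ)), and let U_τ : Σ → ℝ be the utility vector at round τ. Then the swap regret decomposes as: max_{φ:Σ→Σ} Σ_{τ=1}^T Σ_{σ∈Σ} p_τ(σ)·(U_τ(φ(σ)) − ⟨q_{τ,σ}, U_τ⟩) ≤ Σ_{σ∈Σ} max_{σ'∈Σ} Σ_{τ=1}^T (p_τ(σ)·U_τ(σ') − p_τ(σ)·⟨q_{τ,σ}, U_τ⟩). Moreover, since p_τ = p_τ·Q_τ implies ⟨p_τ, U_τ⟩ = Σ_σ p_τ(σ)·⟨q_{τ,σ}, U_τ⟩, the left-hand side equals the swap regret max_φ Σ_τ Σ_σ p_τ(σ)·(U_τ(φ(σ)) − U_τ applied via p_τ), i.e., max_φ Σ_τ (Σ_σ p_τ(σ)·U_τ(φ(σ)) − ⟨p_τ,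 U_τ⟩). -/
open Finset

theorem Finset.sup'_sum_apply_le_sum_sup' {ι α β : Type*} [Fintype ι] [DecidableEq ι]
    [Fintype α] [Nonempty α] [AddCommMonoid β] [LinearOrder β] [IsOrderedAddMonoid β]
    (f : ι → α → β) :
    univ.sup' univ_nonempty (fun φ : ι → α => ∑ i, f i (φ i))
      ≤ ∑ i, univ.sup' univ_nonempty (f i) :=
  sup'_le _ _ fun φ _ => sum_le_sum fun i _ => le_sup' (f i) (mem_univ (φ i))

/-- `p ⬝ᵥ (Q *ᵥ u) = (p ᵥ* Q) ⬝ᵥ u = p ⬝ᵥ u`. -/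
theorem sum_mul_sum_mul_eq_of_stationary {S R : Type*} [Fintype S] [CommSemiring R]
    (p u : S → R) (q : S → S → R) (hstat : ∀ σ', p σ' = ∑ σ, p σ * q σ σ') :
    ∑ σ, p σ * ∑ ρ, q σ ρ * u ρ = ∑ σ, p σ * u σ := by
  have hfix : Matrix.vecMul p (Matrix.of q) = p := funext fun σ' => (hstat σ').symm
  simpa [dotProduct, Matrix.mulVec, Matrix.vecMul] using
    (Matrix.dotProduct_mulVec p (Matrix.of q) u).trans (congrArg (· ⬝ᵥ u) hfix)

theorem external_to_swap_reduction_general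
    {S : Type*} [Fintype S] [DecidableEq S] [Nonempty S]
    (T : ℕ)
    (U : ℕ → S → ℝ)
    (p : ℕ → S → ℝ)
    (q : ℕ → S → S → ℝ)
    (hstat : ∀ τ σ', p τ σ' = ∑ σ : S, p τ σ * q τ σ σ') :
    (Finset.univ.sup' Finset.univ_nonempty
        (fun φ : S → S => ∑ τ ∈ Finset.range T, ∑ σ : S,
          p τ σ * (U τ (φ σ) - ∑ ρ : S, q τ σ ρ * U τ ρ))
      ≤ ∑ σ : S, Finset.univ.sup' Finset.univ_nonempty
          (fun σ' : S => ∑ τ ∈ Finset.range T,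
            (p τ σ * U τ σ' - p τ σ * ∑ ρ : S, q τ σ ρ * U τ ρ))) ∧
    (Finset.univ.sup' Finset.univ_nonempty
        (fun φ : S → S => ∑ τ ∈ Finset.range T, ∑ σ : S,
          p τ σ * (U τ (φ σ) - ∑ ρ : S, q τ σ ρ * U τ ρ))
      = Finset.univ.sup' Finset.univ_nonempty
          (fun φ : S → S => ∑ τ ∈ Finset.range T,
            ((∑ σ : S, p τ σ * U τ (φ σ)) - ∑ σ : S, p τ σ * U τ σ))) := by
  constructor
  · have hrows : ∀ φ : S → S, ∑ τ ∈ range T, ∑ σ, p τ σ * (U τ (φ σ) - ∑ ρ, q τ σ ρ * U τ ρ)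
        = ∑ σ, ∑ τ ∈ range T, (p τ σ * U τ (φ σ) - p τ σ * ∑ ρ, q τ σ ρ * U τ ρ) := fun φ => by
      rw [sum_comm]
      simp only [mul_sub]
    simp only [hrows]
    exact sup'_sum_apply_le_sum_sup' fun σ σ' =>
      ∑ τ ∈ range T, (p τ σ * U τ σ' - p τ σ * ∑ ρ, q τ σ ρ * U τ ρ)
  · congr 1 with φ
    refine sum_congr rfl fun τ _ => ?_
    rw [← sum_mul_sum_mul_eq_of_stationary (p τ) (U τ) (q τ) (hstat τ), ← sum_sub_distrib]
    simp only [mul_sub]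

/-- Blum–Mansour external-to-swap regret reduction: if each `p_τ` is a
stationary distribution of the row-stochastic matrix with rows `q_{τ,σ}`, then
the swap regret (equal, by stationarity, to
`max_φ Σ_τ (Σ_σ p_τ(σ) U_τ(φ σ) − ⟨p_τ, U_τ⟩)`) is bounded by the sum over
source strategies of per-row external regrets with scaled rewards. -/
theorem external_to_swap_reduction
    {S : Type*} [Fintype S] [DecidableEq S] [Nonempty S]
    (T : ℕ)
    (U : ℕ → S → ℝ)
    (p : ℕ → S → ℝ) (hp0 : ∀ τ σ, 0 ≤ p τ σ) (hp1 : ∀ τ, ∑ σ : S, p τ σ = 1)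
    (q : ℕ → S → S → ℝ) (hq0 : ∀ τ σ σ', 0 ≤ q τ σ σ')
    (hq1 : ∀ τ σ, ∑ σ' : S, q τ σ σ' = 1)
    (hstat : ∀ τ σ', p τ σ' = ∑ σ : S, p τ σ * q τ σ σ') :
    (Finset.univ.sup' Finset.univ_nonempty
        (fun φ : S → S => ∑ τ ∈ Finset.range T, ∑ σ : S,
          p τ σ * (U τ (φ σ) - ∑ ρ : S, q τ σ ρ * U τ ρ))
      ≤ ∑ σ : S, Finset.univ.sup' Finset.univ_nonempty
          (fun σ' : S => ∑ τ ∈ Finset.range T,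
            (p τ σ * U τ σ' - p τ σ * ∑ ρ : S, q τ σ ρ * U τ ρ))) ∧
    (Finset.univ.sup' Finset.univ_nonempty
        (fun φ : S → S => ∑ τ ∈ Finset.range T, ∑ σ : S,
          p τ σ * (U τ (φ σ) - ∑ ρ : S, q τ σ ρ * U τ ρ))
      = Finset.univ.sup' Finset.univ_nonempty
          (fun φ : S → S => ∑ τ ∈ Finset.range T,
            ((∑ σ : S, p τ σ * U τ (φ σ)) - ∑ σ : S, p τ σ * U τ σ))) :=
  external_to_swap_reduction_general T U p q hstat
end

section
/- Suppose for each source strategy σ in a finite set Σ of size N, the row-wise external regret satisfies max_{σ'} Σ_{τ=1}^T (v_{τ,σ}(σ') − ⟨q_{τ,σ}, v_{τ,σ}⟩) ≤ R, where v_{τ,σ}(σ') = p_τ(σ)·U_τ(σ') with p_τ ∈ Δ(Σ), U_τ : Σ → [0,1], and p_τ = p_τ·Q_τ (rows of Q_τ being q_{τ,σ}). Then the internal (swap) regret satisfies max_{φ:Σ→Σ} Σ_{τ=1}^T (Σ_σ p_τ(σ)·U_τ(φ(σ)) − ⟨p_τ, U_τ⟩) ≤ N·R. -/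
/-! Stationarity of `p_τ` rewrites the realized reward `⟨p_τ, U_τ⟩` as
`∑_σ p_τ(σ) ⟨q_{τ,σ}, U_τ⟩`, so the swap regret against `φ` splits into `N` row regrets,
row `σ` being compared with the fixed deviation `φ σ`. -/

open Finset Matrix

theorem sum_mul_eq_sum_mul_sum_of_stationary {S R : Type*} [Fintype S] [CommSemiring R]
    {p : S → R} {q : S → S → R} (hstat : ∀ σ', p σ' = ∑ σ, p σ * q σ σ') (U : S → R) :
    ∑ σ, p σ * U σ = ∑ σ, p σ * ∑ ρ, q σ ρ * U ρ := by
  have hvecMul : p ᵥ* Matrix.of q = p := funext fun σ' => (hstat σ').symm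
  calc ∑ σ, p σ * U σ = (p ᵥ* Matrix.of q) ⬝ᵥ U := by rw [hvecMul]; rfl
    _ = p ⬝ᵥ (Matrix.of q *ᵥ U) := (Matrix.dotProduct_mulVec p _ U).symm

theorem swap_regret_le_card_mul_row_regret_general
    {S : Type*} [Fintype S]
    (T : ℕ) (R : ℝ)
    (U : ℕ → S → ℝ)
    (p : ℕ → S → ℝ)
    (q : ℕ → S → S → ℝ)
    (hstat : ∀ τ σ', p τ σ' = ∑ σ : S, p τ σ * q τ σ σ')
    (hrow : ∀ σ σ' : S, ∑ τ ∈ Finset.range T,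
      (p τ σ * U τ σ' - p τ σ * ∑ ρ : S, q τ σ ρ * U τ ρ) ≤ R) :
    ∀ φ : S → S, ∑ τ ∈ Finset.range T,
        ((∑ σ : S, p τ σ * U τ (φ σ)) - ∑ σ : S, p τ σ * U τ σ)
      ≤ (Fintype.card S : ℝ) * R := by
  intro φ
  calc ∑ τ ∈ range T, ((∑ σ, p τ σ * U τ (φ σ)) - ∑ σ, p τ σ * U τ σ)
      = ∑ σ, ∑ τ ∈ range T, (p τ σ * U τ (φ σ) - p τ σ * ∑ ρ, q τ σ ρ * U τ ρ) := by
        rw [sum_comm]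
        refine sum_congr rfl fun τ _ => ?_
        rw [sum_mul_eq_sum_mul_sum_of_stationary (hstat τ) (U τ), ← sum_sub_distrib]
    _ ≤ ∑ _σ : S, R := sum_le_sum fun σ _ => hrow σ (φ σ)
    _ = (Fintype.card S : ℝ) * R := by simp

/-- If every row's external regret (on the scaled rewards
`v_{τ,σ}(σ') = p_τ(σ)·U_τ(σ')`) is at most `R`, and each `p_τ` is a stationary
distribution of the row-stochastic matrix with rows `q_{τ,σ}`, then the swap
regret is at most `N·R`. -/
theorem swap_regret_le_card_mul_row_regret
    {S : Type*} [Fintype S]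
    (T : ℕ) (R : ℝ)
    (U : ℕ → S → ℝ) (hU : ∀ τ σ, U τ σ ∈ Set.Icc (0 : ℝ) 1)
    (p : ℕ → S → ℝ) (hp0 : ∀ τ σ, 0 ≤ p τ σ) (hp1 : ∀ τ, ∑ σ : S, p τ σ = 1)
    (q : ℕ → S → S → ℝ) (hq0 : ∀ τ σ σ', 0 ≤ q τ σ σ')
    (hq1 : ∀ τ σ, ∑ σ' : S, q τ σ σ' = 1)
    (hstat : ∀ τ σ', p τ σ' = ∑ σ : S, p τ σ * q τ σ σ')
    (hrow : ∀ σ σ' : S, ∑ τ ∈ Finset.range T,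
      (p τ σ * U τ σ' - p τ σ * ∑ ρ : S, q τ σ ρ * U τ ρ) ≤ R) :
    ∀ φ : S → S, ∑ τ ∈ Finset.range T,
        ((∑ σ : S, p τ σ * U τ (φ σ)) - ∑ σ : S, p τ σ * U τ σ)
      ≤ (Fintype.card S : ℝ) * R :=
  swap_regret_le_card_mul_row_regret_general T R U p q hstat hrow
end
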